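/- Let {(M_t, Z_t); t ≥ 1} be i.i.d. in R^{d×d} × R^d with ‖M_1 ⋯ M_t‖ → 0 a.s. Let S_{m,n} = ∑_{i=m+1}^n (∏_{j=1}^{i-1} M_j) Z_i. Suppose the partial sums S_{0,t} are tight in distribution. Then for every ε > 0, sup_{n > m} P(|S_{m,n}| > ε) → 0 as m → ∞. -/

import Mathlib

/-!
Write `S_{m,n} = (M₁ ⋯ M_m) T`, where `T` is the partial sum `S_{0,n-m}` of the shifted sequence
`(M_{m+t}, Z_{m+t})_t`, so that `T` has the law of `S_{0,n-m}`. Since `|S_{m,n}| ≤ ‖M₁ ⋯ M_m‖ |T|`,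
the event `|S_{m,n}| > ε` forces `‖M₁ ⋯ M_m‖ ≥ ε / K` or `|T| > K`. By tightness the second event
has probability `< δ / 2` for a suitable `K`, uniformly in `n`; the products tend to `0` almost
surely, hence in probability, so the first one has probability `≤ δ / 2` once `m` is large.
-/

open MeasureTheory ProbabilityTheory Filter
open scoped ENNReal NNReal

noncomputable section

instance {m n α : Type*} [MeasurableSpace α] : MeasurableSpace (Matrix m n α) :=
  inferInstanceAs (MeasurableSpace (m → n → α))

/-- The sequence `W` is i.i.d. under `μ`. -/
def IsIIDSeq {Ω β : Type*} [MeasurableSpace Ω] [MeasurableSpace β]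
    (μ : Measure Ω) (W : ℕ → Ω → β) : Prop :=
  iIndepFun W μ ∧ ∀ t, IdentDistrib (W t) (W 0) μ μ

/-- The ordered product `M 0 * M 1 * ⋯ * M (n-1)` (the paper's `M₁ M₂ ⋯ Mₙ`, in
0-based indexing; the empty product is the identity matrix). -/
def prodTo {Ω : Type*} {d : ℕ} (M : ℕ → Ω → Matrix (Fin d) (Fin d) ℝ) (n : ℕ) (ω : Ω) :
    Matrix (Fin d) (Fin d) ℝ :=
  ((List.range n).map (fun j => M j ω)).prod

/-- The ordered product `M a * M (a+1) * ⋯ * M (b-1)` (empty product for `a ≥ b`). -/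
def prodSeg {Ω : Type*} {d : ℕ} (M : ℕ → Ω → Matrix (Fin d) (Fin d) ℝ) (a b : ℕ) (ω : Ω) :
    Matrix (Fin d) (Fin d) ℝ :=
  ((List.range (b - a)).map (fun j => M (a + j) ω)).prod

/-- Application of a matrix to a vector of Euclidean space (so that the norms involved
are the Euclidean norm and the induced spectral operator norm). -/
def app {d : ℕ} (A : Matrix (Fin d) (Fin d) ℝ) (v : EuclideanSpace ℝ (Fin d)) :
    EuclideanSpace ℝ (Fin d) :=
  Matrix.toEuclideanCLM (𝕜 := ℝ) A v

/-- The spectral norm of a matrix: the operator norm induced by the Euclidean norm. -/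
def sNorm {d : ℕ} (A : Matrix (Fin d) (Fin d) ℝ) : ℝ :=
  ‖Matrix.toEuclideanCLM (𝕜 := ℝ) A‖

/-- Outer product `u vᵀ` of two vectors. -/
def outer {d : ℕ} (u v : EuclideanSpace ℝ (Fin d)) : Matrix (Fin d) (Fin d) ℝ :=
  Matrix.of fun i j => u i * v j

instance {m n : Type*} [Countable m] [Countable n] : BorelSpace (Matrix m n ℝ) :=
  inferInstanceAs (BorelSpace (m → n → ℝ))

instance {m n : Type*} [Countable m] [Countable n] :
    SecondCountableTopology (Matrix m n ℝ) :=
  inferInstanceAs (SecondCountableTopology (m → n → ℝ))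

/-- The paper's `S_{0,n}`. -/
def partialSum {Ω : Type*} {d : ℕ} (M : ℕ → Ω → Matrix (Fin d) (Fin d) ℝ)
    (Z : ℕ → Ω → EuclideanSpace ℝ (Fin d)) (n : ℕ) (ω : Ω) : EuclideanSpace ℝ (Fin d) :=
  ∑ i ∈ Finset.range n, app (prodTo M i ω) (Z i ω)

section Measurability

variable {d : ℕ} {α : Type*} [MeasurableSpace α]

lemma continuous_toEuclideanCLM :
    Continuous (Matrix.toEuclideanCLM (𝕜 := ℝ) (n := Fin d)) :=
  LinearMap.continuous_of_finiteDimensional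
    (Matrix.toEuclideanCLM (𝕜 := ℝ) (n := Fin d)).toAlgEquiv.toLinearMap

lemma Measurable.app {A : α → Matrix (Fin d) (Fin d) ℝ} {v : α → EuclideanSpace ℝ (Fin d)}
    (hA : Measurable A) (hv : Measurable v) : Measurable fun a => app (A a) (v a) :=
  ((continuous_toEuclideanCLM.comp continuous_fst).clm_apply continuous_snd).measurable2 hA hv

lemma measurable_prodTo {M : ℕ → α → Matrix (Fin d) (Fin d) ℝ} (hM : ∀ t, Measurable (M t))
    (n : ℕ) : Measurable (prodTo M n) := by
  have h := List.measurable_fun_prod ((List.range n).map M) (by simpa using fun j _ => hM j)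
  simp only [List.map_map, Function.comp_def] at h
  exact h

lemma measurable_partialSum {M : ℕ → α → Matrix (Fin d) (Fin d) ℝ}
    {Z : ℕ → α → EuclideanSpace ℝ (Fin d)} (hM : ∀ t, Measurable (M t))
    (hZ : ∀ t, Measurable (Z t)) (n : ℕ) : Measurable (partialSum M Z n) :=
  Finset.measurable_sum _ fun i _ => (measurable_prodTo hM i).app (hZ i)

end Measurability

section Algebra

variable {Ω : Type*} {d : ℕ} (M : ℕ → Ω → Matrix (Fin d) (Fin d) ℝ)
  (Z : ℕ → Ω → EuclideanSpace ℝ (Fin d))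

lemma prodTo_add (m j : ℕ) (ω : Ω) :
    prodTo M (m + j) ω = prodTo M m ω * prodTo (fun t => M (m + t)) j ω := by
  simp only [prodTo, List.range_add, List.map_append, List.prod_append, List.map_map,
    Function.comp_def]

lemma sum_Ico_eq_app_partialSum_shift (m n : ℕ) (ω : Ω) :
    ∑ i ∈ Finset.Ico m n, app (prodTo M i ω) (Z i ω) =
      app (prodTo M m ω) (partialSum (fun t => M (m + t)) (fun t => Z (m + t)) (n - m) ω) := by
  simp only [partialSum, app, Finset.sum_Ico_eq_sum_range, prodTo_add, map_mul,
    mul_apply_eq_comp, map_sum]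

end Algebra

lemma ContinuousLinearMap.div_le_opNorm_or_lt_norm_of_lt_norm_apply {𝕜 E F : Type*}
    [NontriviallyNormedField 𝕜] [SeminormedAddCommGroup E] [SeminormedAddCommGroup F]
    [NormedSpace 𝕜 E] [NormedSpace 𝕜 F] (L : E →L[𝕜] F) {x : E} {ε K : ℝ} (hK : 0 < K)
    (h : ε < ‖L x‖) : ε / K ≤ ‖L‖ ∨ K < ‖x‖ := by
  by_contra! hLx
  have : ‖L x‖ < ε := calc
    ‖L x‖ ≤ ‖L‖ * ‖x‖ := L.le_opNorm x
    _ ≤ ‖L‖ * K := by gcongr; exact hLx.2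
    _ < ε / K * K := by gcongr; exact hLx.1
    _ = ε := div_mul_cancel₀ ε hK.ne'
  linarith

lemma IsIIDSeq.identDistrib_shift {Ω β : Type*} [MeasurableSpace Ω] [MeasurableSpace β]
    {μ : Measure Ω} {W : ℕ → Ω → β} (hiid : IsIIDSeq μ W) (hW : ∀ t, Measurable (W t))
    (m : ℕ) : IdentDistrib (fun ω t => W (m + t) ω) (fun ω t => W t ω) μ μ where
  aemeasurable_fst := (measurable_pi_iff.2 fun t => hW (m + t)).aemeasurable
  aemeasurable_snd := (measurable_pi_iff.2 hW).aemeasurable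
  map_eq := by
    rw [(hiid.1.precomp (add_right_injective m)).map_fun_eq_infinitePi_map (fun t => hW _),
      hiid.1.map_fun_eq_infinitePi_map hW]
    congr 1
    funext t
    exact (hiid.2 (m + t)).map_eq.trans (hiid.2 t).map_eq.symm

lemma identDistrib_partialSum_shift {Ω : Type*} [MeasurableSpace Ω] {μ : Measure Ω} {d : ℕ}
    {M : ℕ → Ω → Matrix (Fin d) (Fin d) ℝ} {Z : ℕ → Ω → EuclideanSpace ℝ (Fin d)}
    (hM : ∀ t, Measurable (M t)) (hZ : ∀ t, Measurable (Z t))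
    (hiid : IsIIDSeq μ (fun t ω => (M t ω, Z t ω))) (m n : ℕ) :
    IdentDistrib (partialSum (fun t => M (m + t)) (fun t => Z (m + t)) n)
      (partialSum M Z n) μ μ := by
  -- `S_{0,n}` is a fixed measurable function of the whole sequence `t ↦ (M t, Z t)`.
  let S : (ℕ → Matrix (Fin d) (Fin d) ℝ × EuclideanSpace ℝ (Fin d)) →
      EuclideanSpace ℝ (Fin d) :=
    partialSum (fun t w => (w t).1) (fun t w => (w t).2) n
  have hS : Measurable S := measurable_partialSum (fun t => (measurable_pi_apply t).fst)
    (fun t => (measurable_pi_apply t).snd) n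
  exact (hiid.identDistrib_shift (fun t => (hM t).prodMk (hZ t)) m).comp hS

lemma tendsto_measure_le_norm_of_ae_tendsto_zero {Ω E : Type*} [MeasurableSpace Ω]
    {μ : Measure Ω} [IsFiniteMeasure μ] [NormedAddCommGroup E] {f : ℕ → Ω → E}
    (hf : ∀ n, AEStronglyMeasurable (f n) μ)
    (h : ∀ᵐ ω ∂μ, Tendsto (fun n => f n ω) atTop (nhds 0)) {η : ℝ} (hη : 0 < η) :
    Tendsto (fun n => μ {ω | η ≤ ‖f n ω‖}) atTop (nhds 0) := by
  simpa only [sub_zero] using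
    tendstoInMeasure_iff_norm.1 (tendstoInMeasure_of_tendsto_ae hf h) η hη

/-- Under C0, if the partial sums `S_{0,t}` are tight, then
`sup_{n > m} P(|S_{m,n}| > ε) → 0` as `m → ∞`, where
`S_{m,n} = ∑_{i=m+1}^n (M₁⋯M_{i-1}) Z_i`. -/
theorem statement16 {d : ℕ} {Ω : Type*} [MeasurableSpace Ω] (μ : Measure Ω)
    [IsProbabilityMeasure μ]
    (M : ℕ → Ω → Matrix (Fin d) (Fin d) ℝ) (Z : ℕ → Ω → EuclideanSpace ℝ (Fin d))
    (hM : ∀ t, Measurable (M t)) (hZ : ∀ t, Measurable (Z t))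
    (hiid : IsIIDSeq μ (fun t ω => (M t ω, Z t ω)))
    (hC0 : ∀ᵐ ω ∂μ, Tendsto (fun t => sNorm (prodTo M t ω)) atTop (nhds 0))
    (htight : ∀ δ : ℝ≥0∞, 0 < δ → ∃ K : ℝ, ∀ t : ℕ,
      μ {ω | K < ‖∑ i ∈ Finset.range t, app (prodTo M i ω) (Z i ω)‖} < δ) :
    ∀ ε : ℝ, 0 < ε →
      Tendsto (fun m : ℕ =>
          ⨆ n : ℕ, ⨆ _ : m < n,
            μ {ω | ε < ‖∑ i ∈ Finset.Ico m n, app (prodTo M i ω) (Z i ω)‖})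
        atTop (nhds (0 : ℝ≥0∞)) := by
  intro ε hε
  rw [ENNReal.tendsto_nhds_zero]
  intro δ hδ
  obtain ⟨K₀, hK₀⟩ := htight (δ / 2) (ENNReal.half_pos hδ.ne')
  set K := max K₀ 1
  have hK : 0 < K := lt_max_of_lt_right one_pos
  have hprod : ∀ᶠ m in atTop, μ {ω | ε / K ≤ sNorm (prodTo M m ω)} ≤ δ / 2 :=
    (tendsto_measure_le_norm_of_ae_tendsto_zero
      (fun m => (continuous_toEuclideanCLM.measurable.comp
        (measurable_prodTo hM m)).aestronglyMeasurable)
      (hC0.mono fun _ h => tendsto_zero_iff_norm_tendsto_zero.2 h)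
      (div_pos hε hK)).eventually_le_const (ENNReal.half_pos hδ.ne')
  filter_upwards [hprod] with m hm
  refine iSup₂_le fun n _ => ?_
  let T := partialSum (fun t => M (m + t)) (fun t => Z (m + t)) (n - m)
  have hT : μ {ω | K₀ < ‖T ω‖} ≤ δ / 2 :=
    ((identDistrib_partialSum_shift hM hZ hiid m (n - m)).measure_mem_eq
      (measurableSet_lt measurable_const measurable_norm)).trans_le (hK₀ (n - m)).le
  calc μ {ω | ε < ‖∑ i ∈ Finset.Ico m n, app (prodTo M i ω) (Z i ω)‖}
      ≤ μ ({ω | ε / K ≤ sNorm (prodTo M m ω)} ∪ {ω | K₀ < ‖T ω‖}) := by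
        refine measure_mono fun ω hω => ?_
        rw [Set.mem_ofPred_eq, sum_Ico_eq_app_partialSum_shift] at hω
        exact (ContinuousLinearMap.div_le_opNorm_or_lt_norm_of_lt_norm_apply _ hK hω).imp id
          (le_max_left K₀ 1).trans_lt
    _ ≤ δ / 2 + δ / 2 := (measure_union_le _ _).trans (add_le_add hm hT)
    _ = δ := ENNReal.add_halves δ
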